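/- arXiv:1906.07041 — 7 statements merged into one kernel-verified Lean document; each statement's English description precedes it below -/
import Mathlib

section
/- For channels C = [[9/10, 0], [1/10, 1]] and C̄ = [[0, 9/10], [1, 1/10]], input distribution Π = diag(1/2, 1/2), and utility matrix U = [[2, 0], [0, 1]], the maximum of tr(U · A · C · Π) over 2×2 column-stochastic matrices A equals 28/20 for C, while the corresponding maximum for C̄ equals 29/20. In particular, C̄ being a Shannon-garbling of C does not imply that C is more Blackwell-useful than C̄. -/
/-!
Since `tr(U (A C) Π) = tr(A G)` with `G = C Π U`, the expected utility is `∑_y ∑_a A a y * G y a`: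
each column of the column-stochastic `A` averages the row `G y ·`, so the value is at most
`∑_y max_a G y a`, attained by the deterministic policy answering an argmax on each output `y`.
For `C` the argmax actions are `y ↦ y` with value `9/10 + 1/2`; for `C̄` they are `y ↦ 1 - y` with
value `9/20 + 1`.
-/

open Matrix BigOperators

def ColStoch {m n : ℕ} (A : Matrix (Fin m) (Fin n) ℝ) : Prop :=
  (∀ i j, 0 ≤ A i j) ∧ ∀ j, ∑ i, A i j = 1

lemma trace_mul_mul_diagonal_eq_trace_mul {k m n : ℕ} (U : Matrix (Fin k) (Fin m) ℝ)
    (A : Matrix (Fin m) (Fin n) ℝ) (C : Matrix (Fin n) (Fin k) ℝ) (p : Fin k → ℝ) :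
    (U * (A * C) * diagonal p).trace = (A * (C * diagonal p * U)).trace := by
  rw [Matrix.mul_assoc, trace_mul_comm, Matrix.mul_assoc, Matrix.mul_assoc, Matrix.mul_assoc]

lemma trace_mul_eq_sum_sum {ι κ R : Type*} [Fintype ι] [Fintype κ] [NonUnitalNonAssocSemiring R]
    (A : Matrix ι κ R) (G : Matrix κ ι R) :
    (A * G).trace = ∑ y, ∑ a, A a y * G y a := by
  rw [trace, Finset.sum_comm]
  rfl

lemma ColStoch.sum_mul_le {m n : ℕ} {A : Matrix (Fin m) (Fin n) ℝ} (hA : ColStoch A)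
    (y : Fin n) {w : Fin m → ℝ} {M : ℝ} (hw : ∀ a, w a ≤ M) :
    ∑ a, A a y * w a ≤ M :=
  calc ∑ a, A a y * w a ≤ ∑ a, A a y * M :=
        Finset.sum_le_sum fun a _ => mul_le_mul_of_nonneg_left (hw a) (hA.1 a y)
    _ = M := by rw [← Finset.sum_mul, hA.2 y, one_mul]

lemma ColStoch.trace_mul_le {m n : ℕ} {A : Matrix (Fin m) (Fin n) ℝ} (hA : ColStoch A)
    {G : Matrix (Fin n) (Fin m) ℝ} {f : Fin n → Fin m} (hf : ∀ y a, G y a ≤ G y (f y)) :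
    (A * G).trace ≤ ∑ y, G y (f y) := by
  rw [trace_mul_eq_sum_sum]
  exact Finset.sum_le_sum fun y _ => hA.sum_mul_le y (hf y)

def decisionMatrix {m n : ℕ} (f : Fin n → Fin m) : Matrix (Fin m) (Fin n) ℝ :=
  Matrix.of fun a y => if a = f y then 1 else 0

lemma colStoch_decisionMatrix {m n : ℕ} (f : Fin n → Fin m) : ColStoch (decisionMatrix f) :=
  ⟨fun a y => by simp only [decisionMatrix, of_apply]; split_ifs <;> norm_num,
    fun y => by simp [decisionMatrix]⟩

lemma trace_decisionMatrix_mul {m n : ℕ} (f : Fin n → Fin m) (G : Matrix (Fin n) (Fin m) ℝ) :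
    (decisionMatrix f * G).trace = ∑ y, G y (f y) := by
  simp [trace_mul_eq_sum_sum, decisionMatrix]

theorem isGreatest_trace_policy {k m n : ℕ} (U : Matrix (Fin k) (Fin m) ℝ)
    (C : Matrix (Fin n) (Fin k) ℝ) (p : Fin k → ℝ) (f : Fin n → Fin m)
    (hf : ∀ y a, (C * diagonal p * U) y a ≤ (C * diagonal p * U) y (f y)) :
    IsGreatest {x : ℝ | ∃ A : Matrix (Fin m) (Fin n) ℝ,
        ColStoch A ∧ x = (U * (A * C) * diagonal p).trace}
      (∑ y, (C * diagonal p * U) y (f y)) := by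
  refine ⟨⟨decisionMatrix f, colStoch_decisionMatrix f, ?_⟩, ?_⟩
  · rw [trace_mul_mul_diagonal_eq_trace_mul, trace_decisionMatrix_mul]
  · rintro x ⟨A, hA, rfl⟩
    rw [trace_mul_mul_diagonal_eq_trace_mul]
    exact hA.trace_mul_le hf

theorem rauh_counterexample :
    let C : Matrix (Fin 2) (Fin 2) ℝ := !![9/10, 0; 1/10, 1]
    let Cbar : Matrix (Fin 2) (Fin 2) ℝ := !![0, 9/10; 1, 1/10]
    let Pi : Matrix (Fin 2) (Fin 2) ℝ := !![1/2, 0; 0, 1/2]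
    let U : Matrix (Fin 2) (Fin 2) ℝ := !![2, 0; 0, 1]
    IsGreatest {x : ℝ | ∃ A : Matrix (Fin 2) (Fin 2) ℝ,
        ColStoch A ∧ x = (U * (A * C) * Pi).trace} (28/20) ∧
    IsGreatest {x : ℝ | ∃ A : Matrix (Fin 2) (Fin 2) ℝ,
        ColStoch A ∧ x = (U * (A * Cbar) * Pi).trace} (29/20) := by
  intro C Cbar Pi U
  have hPi : Pi = diagonal ![1/2, 1/2] := by
    ext i j; fin_cases i <;> fin_cases j <;> simp [Pi]
  have hGC : C * Pi * U = !![9/10, 0; 1/10, 1/2] := by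
    simp only [C, Pi, U, mul_fin_two]; norm_num
  have hGCbar : Cbar * Pi * U = !![0, 9/20; 1, 1/20] := by
    simp only [Cbar, Pi, U, mul_fin_two]; norm_num
  have hC := isGreatest_trace_policy U C ![1/2, 1/2] id
  have hCbar := isGreatest_trace_policy U Cbar ![1/2, 1/2] ![1, 0]
  rw [← hPi, hGC] at hC
  rw [← hPi, hGCbar] at hCbar
  constructor
  · convert hC (by intro y a; fin_cases y <;> fin_cases a <;> norm_num) using 1
    norm_num [Fin.sum_univ_two]
  · convert hCbar (by intro y a; fin_cases y <;> fin_cases a <;> norm_num) using 1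
    norm_num [Fin.sum_univ_two]
end

section
/- Let C ∈ ℝ^{n×n} be a channel and U = α·P̃ an exact utility matrix, where α > 0 and P̃ is an n×n permutation matrix. With uniform input distribution Π = (1/n)·I, the maximal expected utility max over column-stochastic A of tr(U · A · C · Π) equals (α/n) · Σ_{i=1}^n max_{1≤j≤n} c_{ij}, where c_{ij} are the entries of C. -/
/-!
The expected utility is linear in the strategy `A` and splits over its columns: under `U = α P_σ`,
column `j` of `A` contributes `α/n` times a convex combination of the entries `C j (σ k)`. Such a
combination is at most `max_m C j m`, and the deterministic strategy sending each `j` to the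
action `k` with `σ k` a maximiser of row `j` attains this bound in every column at once.
-/

open Matrix BigOperators

open Finset

theorem Finset.sup'_univ_comp_equiv {ι κ α : Type*} [Fintype ι] [Fintype κ] [Nonempty ι]
    [Nonempty κ] [SemilatticeSup α] (e : ι ≃ κ) (f : κ → α) :
    univ.sup' univ_nonempty (f ∘ e) = univ.sup' univ_nonempty f :=
  (sup'_comp_eq_map f univ_nonempty (f := e.toEmbedding)).trans (by simp only [map_univ_equiv])

theorem Matrix.trace_mul_smul_one {ι R : Type*} [Fintype ι] [DecidableEq ι] [CommSemiring R]
    (M : Matrix ι ι R) (c : R) : (M * (c • (1 : Matrix ι ι R))).trace = c * M.trace := by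
  rw [Matrix.mul_smul, mul_one, trace_smul, smul_eq_mul]

theorem Matrix.trace_mul_of_eq_smul_perm {ι R : Type*} [Fintype ι] [DecidableEq ι]
    [CommSemiring R] {U : Matrix ι ι R} {α : R} {σ : Equiv.Perm ι}
    (hU : ∀ i j, U i j = α * (if i = σ j then 1 else 0)) (M : Matrix ι ι R) :
    (U * M).trace = α * ∑ k, M k (σ k) := by
  simp only [trace, diag_apply, mul_apply, hU]
  rw [sum_comm, mul_sum]
  simp

section ColStoch

variable {m n : ℕ}

theorem ColStoch.sum_mul_le_sup' [Nonempty (Fin m)] {A : Matrix (Fin m) (Fin n) ℝ}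
    (hA : ColStoch A) (w : Fin m → ℝ) (j : Fin n) :
    ∑ i, A i j * w i ≤ univ.sup' univ_nonempty w :=
  calc ∑ i, A i j * w i ≤ ∑ i, A i j * univ.sup' univ_nonempty w := by
        gcongr with i
        · exact hA.1 i j
        · exact le_sup' w (mem_univ i)
    _ = univ.sup' univ_nonempty w := by rw [← sum_mul, hA.2 j, one_mul]

theorem colStoch_ite_eq (t : Fin n → Fin m) :
    ColStoch (fun i j => if i = t j then (1 : ℝ) else 0) :=
  ⟨fun i j => by positivity, fun j => by simp⟩

theorem isGreatest_sum_mul_colStoch [Nonempty (Fin m)] (W : Matrix (Fin m) (Fin n) ℝ) :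
    IsGreatest {x | ∃ A, ColStoch A ∧ x = ∑ j, ∑ i, A i j * W i j}
      (∑ j, univ.sup' univ_nonempty (fun i => W i j)) := by
  constructor
  · choose t ht using fun j => exists_mem_eq_sup' univ_nonempty (fun i => W i j)
    refine ⟨_, colStoch_ite_eq t, sum_congr rfl fun j _ => ?_⟩
    simp [(ht j).2]
  · rintro _ ⟨A, hA, rfl⟩
    exact sum_le_sum fun j _ => hA.sum_mul_le_sup' _ j

end ColStoch

theorem exact_utility_max_general {n : ℕ} (hn : 0 < n)
    (C : Matrix (Fin n) (Fin n) ℝ)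
    (α : ℝ) (hα : 0 < α) (σ : Equiv.Perm (Fin n))
    (U : Matrix (Fin n) (Fin n) ℝ)
    (hU : ∀ i j, U i j = α * (if i = σ j then 1 else 0)) :
    haveI : Nonempty (Fin n) := Fin.pos_iff_nonempty.mp hn
    IsGreatest {x : ℝ | ∃ A : Matrix (Fin n) (Fin n) ℝ, ColStoch A ∧
        x = (U * (A * C) * ((n : ℝ)⁻¹ • (1 : Matrix (Fin n) (Fin n) ℝ))).trace}
      (α / n * ∑ i, Finset.univ.sup' Finset.univ_nonempty (fun j => C i j)) := by
  have : Nonempty (Fin n) := Fin.pos_iff_nonempty.mp hn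
  have utility (A : Matrix (Fin n) (Fin n) ℝ) :
      (U * (A * C) * ((n : ℝ)⁻¹ • (1 : Matrix (Fin n) (Fin n) ℝ))).trace
        = α / n * ∑ j, ∑ k, A k j * C j (σ k) := by
    rw [trace_mul_smul_one, trace_mul_of_eq_smul_perm hU, sum_comm]
    simp only [mul_apply]
    ring
  obtain ⟨⟨A₀, hA₀, h₀⟩, hub⟩ := isGreatest_sum_mul_colStoch fun k j => C j (σ k)
  have hmax (j : Fin n) : univ.sup' univ_nonempty (fun k => C j (σ k))
      = univ.sup' univ_nonempty (fun k => C j k) :=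
    sup'_univ_comp_equiv σ (C j)
  simp only [hmax] at h₀ hub
  refine ⟨⟨A₀, hA₀, by rw [utility, ← h₀]⟩, ?_⟩
  rintro _ ⟨A, hA, rfl⟩
  rw [utility]
  exact mul_le_mul_of_nonneg_left (hub ⟨A, hA, rfl⟩) (by positivity)

/-- Exact utility: maximal expected utility equals (α/n)·Σ_i max_j c_{ij}. -/
theorem exact_utility_max {n : ℕ} (hn : 0 < n)
    (C : Matrix (Fin n) (Fin n) ℝ) (hC : ColStoch C)
    (α : ℝ) (hα : 0 < α) (σ : Equiv.Perm (Fin n))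
    (U : Matrix (Fin n) (Fin n) ℝ)
    (hU : ∀ i j, U i j = α * (if i = σ j then 1 else 0)) :
    haveI : Nonempty (Fin n) := Fin.pos_iff_nonempty.mp hn
    IsGreatest {x : ℝ | ∃ A : Matrix (Fin n) (Fin n) ℝ, ColStoch A ∧
        x = (U * (A * C) * ((n : ℝ)⁻¹ • (1 : Matrix (Fin n) (Fin n) ℝ))).trace}
      (α / n * ∑ i, Finset.univ.sup' Finset.univ_nonempty (fun j => C i j)) :=
  exact_utility_max_general hn C α hα σ U hU
end

section
/- For the 2×2 channels C = [[1, 1/2], [0, 1/2]] and C̄ = [[1/4, 3/4], [3/4, 1/4]] with uniform input distribution Π = (1/2)·I: for every exact utility matrix U = a·P (a > 0, P a 2×2 permutation matrix), the maximal expected utility over the policy space of C equals the maximal expected utility over the policy space of C̄, and both equal a·(3/4). -/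
/-!
For a utility `U = a • P_σ` and a uniform prior `p • 1`, the expected utility of the policy
`A * C` is `a p ∑ⱼ (A C)ⱼ,σ(j) = a p ∑ⱼ ∑ᵢ Aⱼᵢ Cᵢ,σ(j)`. Since each column of `A` sums to one,
this is at most `a p ∑ᵢ maxₗ Cᵢₗ`, and the deterministic post-processing sending output `i`
to `σ⁻¹` of a maximiser of row `i` attains the bound. For both channels the row maxima sum to
`3/2`.
-/

open Matrix BigOperators

section PolicyValue

variable {n k : ℕ}

lemma ColStoch.sum_mul_apply_le {A : Matrix (Fin n) (Fin k) ℝ} (hA : ColStoch A)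
    (G : Matrix (Fin k) (Fin n) ℝ) (τ : Fin n → Fin n) {r : Fin k → ℝ}
    (hr : ∀ i l, G i l ≤ r i) :
    ∑ j, (A * G) j (τ j) ≤ ∑ i, r i :=
  calc ∑ j, (A * G) j (τ j) = ∑ j, ∑ i, A j i * G i (τ j) := by simp only [mul_apply]
    _ ≤ ∑ j, ∑ i, A j i * r i := by
      gcongr with j _ i _
      · exact hA.1 j i
      · exact hr i (τ j)
    _ = ∑ i, r i := by
      rw [Finset.sum_comm]
      simp only [← Finset.sum_mul, hA.2, one_mul]

def deterministicChannel (g : Fin k → Fin n) : Matrix (Fin n) (Fin k) ℝ :=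
  of fun j i => if j = g i then 1 else 0

lemma colStoch_deterministicChannel (g : Fin k → Fin n) :
    ColStoch (deterministicChannel g) :=
  ⟨fun j i => by simp only [deterministicChannel, of_apply]; split_ifs <;> norm_num,
    fun i => by simp [deterministicChannel]⟩

lemma sum_deterministicChannel_mul_apply (G : Matrix (Fin k) (Fin n) ℝ)
    (σ : Equiv.Perm (Fin n)) (f : Fin k → Fin n) :
    ∑ j, (deterministicChannel (σ.symm ∘ f) * G) j (σ j) = ∑ i, G i (f i) := by
  simp only [mul_apply, deterministicChannel, of_apply, Function.comp_apply, ite_mul,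
    one_mul, zero_mul]
  rw [Finset.sum_comm]
  simp

lemma trace_mul_mul_smul_one {a p : ℝ} {σ : Equiv.Perm (Fin n)}
    {U : Matrix (Fin n) (Fin n) ℝ} (hU : ∀ i j, U i j = a * if i = σ j then 1 else 0)
    (M : Matrix (Fin n) (Fin n) ℝ) :
    (U * M * (p • 1)).trace = a * p * ∑ j, M j (σ j) := by
  rw [Matrix.mul_smul, Matrix.mul_one, trace_smul, trace_mul_comm, trace]
  simp only [diag_apply, mul_apply, hU, mul_ite, mul_one, mul_zero, Finset.sum_ite_eq',
    Finset.mem_univ, if_true, smul_eq_mul, ← Finset.sum_mul]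
  ring

theorem isGreatest_expectedUtility {a p : ℝ} (ha : 0 ≤ a) (hp : 0 ≤ p)
    {σ : Equiv.Perm (Fin n)} {U : Matrix (Fin n) (Fin n) ℝ}
    (hU : ∀ i j, U i j = a * if i = σ j then 1 else 0)
    (C : Matrix (Fin k) (Fin n) ℝ) {f : Fin k → Fin n} (hf : ∀ i l, C i l ≤ C i (f i)) :
    IsGreatest {x : ℝ | ∃ A : Matrix (Fin n) (Fin k) ℝ,
        ColStoch A ∧ x = (U * (A * C) * (p • 1)).trace} (a * p * ∑ i, C i (f i)) := by
  refine ⟨⟨deterministicChannel (σ.symm ∘ f), colStoch_deterministicChannel _, ?_⟩, ?_⟩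
  · rw [trace_mul_mul_smul_one hU, sum_deterministicChannel_mul_apply]
  · rintro _ ⟨A, hA, rfl⟩
    rw [trace_mul_mul_smul_one hU]
    exact mul_le_mul_of_nonneg_left (hA.sum_mul_apply_le C σ hf) (mul_nonneg ha hp)

end PolicyValue

theorem exact_necessity_failure_values :
    let C : Matrix (Fin 2) (Fin 2) ℝ := !![1, 1/2; 0, 1/2]
    let Cbar : Matrix (Fin 2) (Fin 2) ℝ := !![1/4, 3/4; 3/4, 1/4]
    let Pi : Matrix (Fin 2) (Fin 2) ℝ := (2 : ℝ)⁻¹ • (1 : Matrix (Fin 2) (Fin 2) ℝ)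
    ∀ (a : ℝ), 0 < a → ∀ (σ : Equiv.Perm (Fin 2))
      (U : Matrix (Fin 2) (Fin 2) ℝ),
      (∀ i j, U i j = a * (if i = σ j then 1 else 0)) →
      IsGreatest {x : ℝ | ∃ A : Matrix (Fin 2) (Fin 2) ℝ,
          ColStoch A ∧ x = (U * (A * C) * Pi).trace} (a * (3/4)) ∧
      IsGreatest {x : ℝ | ∃ A : Matrix (Fin 2) (Fin 2) ℝ,
          ColStoch A ∧ x = (U * (A * Cbar) * Pi).trace} (a * (3/4)) := by
  intro C Cbar Pi a ha σ U hU
  have hC : ∀ i l, C i l ≤ C i (![0, 1] i) := by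
    intro i l; fin_cases i <;> fin_cases l <;> norm_num [C]
  have hCbar : ∀ i l, Cbar i l ≤ Cbar i (![1, 0] i) := by
    intro i l; fin_cases i <;> fin_cases l <;> norm_num [Cbar]
  constructor
  · convert isGreatest_expectedUtility (p := 2⁻¹) ha.le (by norm_num) hU C hC using 1
    simp [C, Fin.sum_univ_two]; ring
  · convert isGreatest_expectedUtility (p := 2⁻¹) ha.le (by norm_num) hU Cbar hCbar using 1
    simp [Cbar, Fin.sum_univ_two]; ring
end

section
/- For the 2×2 channels C = [[1, 1/2], [0, 1/2]] and C̄ = [[1/4, 3/4], [3/4, 1/4]], neither channel is a Shannon-garbling of the other: there exist no column-stochastic matrices M, N ∈ ℝ^{2×2} with C̄ = M·C·N, and none with C = M·C̄·N. -/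
/-!
A column-stochastic `2 × 2` matrix `M` has `det M = M₀₀ - M₀₁ ∈ [-1, 1]`, and `|det M| = 1` only
for permutation matrices. Since `|det (M * A * N)| = |det M| |det A| |det N|`, a garbling of `A` whose
determinant is at least as large in absolute value just permutes the rows and columns of `A`. Both
`C` and `C̄` have `|det| = 1/2`, yet `C̄` has the entry `1/4`, which `C` lacks, and `C` has the
entry `0`, which `C̄` lacks.
-/

open Matrix BigOperators

namespace ColStoch

lemma le_one {m n : ℕ} {A : Matrix (Fin m) (Fin n) ℝ} (hA : ColStoch A) (i : Fin m) (j : Fin n) :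
    A i j ≤ 1 :=
  hA.2 j ▸ Finset.single_le_sum (fun k _ => hA.1 k j) (Finset.mem_univ i)

variable {M : Matrix (Fin 2) (Fin 2) ℝ}

lemma det_eq_sub (hM : ColStoch M) : M.det = M 0 0 - M 0 1 := by
  have h0 := hM.2 0
  have h1 := hM.2 1
  simp only [Fin.sum_univ_two] at h0 h1
  rw [det_fin_two]
  linear_combination M 0 0 * h1 - M 0 1 * h0

lemma abs_det_le_one (hM : ColStoch M) : |M.det| ≤ 1 := by
  rw [hM.det_eq_sub, abs_sub_le_iff]
  constructor <;> linarith [hM.1 0 0, hM.1 0 1, hM.le_one 0 0, hM.le_one 0 1]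

lemma exists_eq_permMatrix_of_abs_det_eq_one (hM : ColStoch M) (h : |M.det| = 1) :
    ∃ σ : Equiv.Perm (Fin 2), M = σ.permMatrix ℝ := by
  have h0 := hM.2 0
  have h1 := hM.2 1
  simp only [Fin.sum_univ_two] at h0 h1
  have h00 := hM.1 0 0
  have h01 := hM.1 0 1
  have h00' := hM.le_one 0 0
  have h01' := hM.le_one 0 1
  rw [hM.det_eq_sub] at h
  rcases abs_eq (zero_le_one' ℝ) |>.mp h with hdet | hdet
  · refine ⟨1, ?_⟩
    have hentries : M 0 0 = 1 ∧ M 0 1 = 0 ∧ M 1 0 = 0 ∧ M 1 1 = 1 := by refine ⟨?_, ?_, ?_, ?_⟩ <;> linarith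
    ext i j
    fin_cases i <;> fin_cases j <;> simp [hentries]
  · refine ⟨Equiv.swap 0 1, ?_⟩
    have hentries : M 0 0 = 0 ∧ M 0 1 = 1 ∧ M 1 0 = 1 ∧ M 1 1 = 0 := by refine ⟨?_, ?_, ?_, ?_⟩ <;> linarith
    ext i j
    fin_cases i <;> fin_cases j <;> simp [hentries, Equiv.toPEquiv_apply]

end ColStoch

def IsShannonGarbling {m n m' n' : ℕ} (B : Matrix (Fin m') (Fin n') ℝ)
    (A : Matrix (Fin m) (Fin n) ℝ) : Prop :=
  ∃ (M : Matrix (Fin m') (Fin m) ℝ) (N : Matrix (Fin n) (Fin n') ℝ),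
    ColStoch M ∧ ColStoch N ∧ B = M * A * N

namespace IsShannonGarbling

variable {A B : Matrix (Fin 2) (Fin 2) ℝ}

lemma exists_submatrix_eq (h : IsShannonGarbling B A) (hA : A.det ≠ 0)
    (hdet : |A.det| ≤ |B.det|) : ∃ σ τ : Equiv.Perm (Fin 2), B = A.submatrix σ τ := by
  obtain ⟨M, N, hM, hN, rfl⟩ := h
  have hMN : 1 ≤ |M.det| * |N.det| := by
    rw [det_mul, det_mul, abs_mul, abs_mul] at hdet
    have hA' : 0 < |A.det| := abs_pos.mpr hA
    nlinarith
  obtain ⟨σ, rfl⟩ := hM.exists_eq_permMatrix_of_abs_det_eq_one <| hM.abs_det_le_one.antisymm <|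
    hMN.trans (mul_le_of_le_one_right (abs_nonneg _) hN.abs_det_le_one)
  obtain ⟨τ, rfl⟩ := hN.exists_eq_permMatrix_of_abs_det_eq_one <| hN.abs_det_le_one.antisymm <|
    hMN.trans (mul_le_of_le_one_left (abs_nonneg _) hM.abs_det_le_one)
  exact ⟨σ, τ.symm, by simp [PEquiv.toMatrix_toPEquiv_mul, PEquiv.mul_toMatrix_toPEquiv]⟩

lemma exists_entry_eq (h : IsShannonGarbling B A) (hA : A.det ≠ 0)
    (hdet : |A.det| ≤ |B.det|) (i j : Fin 2) : ∃ k l, B i j = A k l := by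
  obtain ⟨σ, τ, rfl⟩ := h.exists_submatrix_eq hA hdet
  exact ⟨σ i, τ j, rfl⟩

end IsShannonGarbling

theorem no_mutual_shannon_garbling :
    let C : Matrix (Fin 2) (Fin 2) ℝ := !![1, 1/2; 0, 1/2]
    let Cbar : Matrix (Fin 2) (Fin 2) ℝ := !![1/4, 3/4; 3/4, 1/4]
    (¬ ∃ M N : Matrix (Fin 2) (Fin 2) ℝ, ColStoch M ∧ ColStoch N ∧ Cbar = M * C * N) ∧
    (¬ ∃ M N : Matrix (Fin 2) (Fin 2) ℝ, ColStoch M ∧ ColStoch N ∧ C = M * Cbar * N) := by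
  intro C Cbar
  have hC : C.det = 1 / 2 := by norm_num [C, det_fin_two]
  have hCbar : Cbar.det = -1 / 2 := by norm_num [Cbar, det_fin_two]
  constructor
  · intro h
    obtain ⟨k, l, hkl⟩ := IsShannonGarbling.exists_entry_eq (B := Cbar) (A := C) h
      (by norm_num [hC]) (by norm_num [hC, hCbar]) 0 0
    fin_cases k <;> fin_cases l <;> norm_num [C, Cbar] at hkl
  · intro h
    obtain ⟨k, l, hkl⟩ := IsShannonGarbling.exists_entry_eq (B := C) (A := Cbar) h
      (by norm_num [hCbar]) (by norm_num [hC, hCbar]) 1 0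
    fin_cases k <;> fin_cases l <;> norm_num [C, Cbar] at hkl
end

section
/- For the channels C₁ = [[1, 1/2], [0, 1/2]] and C₂ = [[1/2, 1], [1/2, 0]], each is a Shannon-garbling of the other (via M = I and N the swap permutation). Moreover, for the utility matrix U = [[0, ε₁], [ε₂, 0]] with ε₁ > ε₂ > 0 and Π = (1/2)·I, the maximal expected utility over Φ(C₁) equals ε₁/2 + ε₂/4, while over Φ(C₂) it equals ε₁/2 + max{0, ε₂/2 − ε₁/4}; these are unequal. -/
/-!
Both channels are obtained from each other by swapping the two output columns, so each is a
garbling of the other. A 2 × 2 column-stochastic post-processing `A` is determined by its first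
row `(a, b) ∈ [0, 1]²`, and the expected utility of `A * C` is affine in `(a, b)`; its maximum
over the unit square is attained at a vertex. For `C₁` the coefficient of `a` is
`ε₂/4 - ε₁/2 < 0` and that of `b` is `ε₂/4 > 0`, whereas for `C₂` they are `ε₂/2 - ε₁/4` and
`-ε₁/4 < 0`. Garbling-equivalence therefore does not preserve the value of a decision problem.
-/

open Matrix BigOperators

open Set

theorem colStoch_iff_mem_colStochastic {n : ℕ} {A : Matrix (Fin n) (Fin n) ℝ} :
    ColStoch A ↔ A ∈ colStochastic ℝ (Fin n) :=
  mem_colStochastic_iff_sum.symm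

theorem colStoch_one (n : ℕ) : ColStoch (1 : Matrix (Fin n) (Fin n) ℝ) :=
  colStoch_iff_mem_colStochastic.2 (one_mem _)

theorem colStoch_permMatrix {n : ℕ} (σ : Equiv.Perm (Fin n)) : ColStoch (σ.permMatrix ℝ) :=
  colStoch_iff_mem_colStochastic.2 permMatrix_mem_colStochastic

theorem colStoch_fin_two_iff {A : Matrix (Fin 2) (Fin 2) ℝ} :
    ColStoch A ↔ ∃ a ∈ Icc (0 : ℝ) 1, ∃ b ∈ Icc (0 : ℝ) 1, A = !![a, b; 1 - a, 1 - b] := by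
  simp only [ColStoch, Fin.forall_fin_two, Fin.sum_univ_two, mem_Icc]
  constructor
  · rintro ⟨⟨⟨h00, h01⟩, h10, h11⟩, hc0, hc1⟩
    refine ⟨A 0 0, ⟨h00, by linarith⟩, A 0 1, ⟨h01, by linarith⟩, ?_⟩
    rw [show 1 - A 0 0 = A 1 0 by linarith, show 1 - A 0 1 = A 1 1 by linarith]
    exact eta_fin_two A
  · rintro ⟨a, ⟨ha0, ha1⟩, b, ⟨hb0, hb1⟩, rfl⟩
    simp [ha0, ha1, hb0, hb1]

theorem mul_le_max_zero_of_mem_Icc {p a : ℝ} (ha : a ∈ Icc (0 : ℝ) 1) : p * a ≤ max 0 p :=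
  calc p * a ≤ max 0 p * a := mul_le_mul_of_nonneg_right (le_max_right _ _) ha.1
    _ ≤ max 0 p := mul_le_of_le_one_right (le_max_left _ _) ha.2

theorem isGreatest_affine_unitSquare (c p q : ℝ) :
    IsGreatest {x | ∃ a ∈ Icc (0 : ℝ) 1, ∃ b ∈ Icc (0 : ℝ) 1, x = c + p * a + q * b}
      (c + max 0 p + max 0 q) := by
  refine ⟨⟨if 0 ≤ p then 1 else 0, by split_ifs <;> simp, if 0 ≤ q then 1 else 0,
      by split_ifs <;> simp, ?_⟩, ?_⟩
  · split_ifs <;> simp [*, le_of_not_ge]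
  · rintro x ⟨a, ha, b, hb, rfl⟩
    linarith [mul_le_max_zero_of_mem_Icc (p := p) ha, mul_le_max_zero_of_mem_Icc (p := q) hb]

theorem isGreatest_colStoch_fin_two_of_affine {f : Matrix (Fin 2) (Fin 2) ℝ → ℝ} {c p q : ℝ}
    (hf : ∀ a b, f !![a, b; 1 - a, 1 - b] = c + p * a + q * b) :
    IsGreatest {x | ∃ A, ColStoch A ∧ x = f A} (c + max 0 p + max 0 q) := by
  convert isGreatest_affine_unitSquare c p q using 1
  ext x
  simp only [colStoch_fin_two_iff, mem_ofPred_eq]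
  constructor
  · rintro ⟨_, ⟨a, ha, b, hb, rfl⟩, rfl⟩
    exact ⟨a, ha, b, hb, hf a b⟩
  · rintro ⟨a, ha, b, hb, rfl⟩
    exact ⟨_, ⟨a, ha, b, hb, rfl⟩, (hf a b).symm⟩

theorem trace_offDiag_mul_mul_half (u v : ℝ) (D : Matrix (Fin 2) (Fin 2) ℝ) :
    (!![0, u; v, 0] * D * !![1/2, 0; 0, 1/2]).trace = (u * D 1 0 + v * D 0 1) / 2 := by
  rw [eta_fin_two D, mul_fin_two, mul_fin_two, trace_fin_two_of]
  simp only [of_apply, cons_val_one, cons_val_zero]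
  ring

theorem mutual_garbling_unequal_utility (ε₁ ε₂ : ℝ) (h₁ : ε₂ < ε₁) (h₂ : 0 < ε₂) :
    let C₁ : Matrix (Fin 2) (Fin 2) ℝ := !![1, 1/2; 0, 1/2]
    let C₂ : Matrix (Fin 2) (Fin 2) ℝ := !![1/2, 1; 1/2, 0]
    let Pi : Matrix (Fin 2) (Fin 2) ℝ := !![1/2, 0; 0, 1/2]
    let U : Matrix (Fin 2) (Fin 2) ℝ := !![0, ε₁; ε₂, 0]
    (∃ M N : Matrix (Fin 2) (Fin 2) ℝ, ColStoch M ∧ ColStoch N ∧ C₂ = M * C₁ * N) ∧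
    (∃ M N : Matrix (Fin 2) (Fin 2) ℝ, ColStoch M ∧ ColStoch N ∧ C₁ = M * C₂ * N) ∧
    IsGreatest {x : ℝ | ∃ A : Matrix (Fin 2) (Fin 2) ℝ,
        ColStoch A ∧ x = (U * (A * C₁) * Pi).trace} (ε₁/2 + ε₂/4) ∧
    IsGreatest {x : ℝ | ∃ A : Matrix (Fin 2) (Fin 2) ℝ,
        ColStoch A ∧ x = (U * (A * C₂) * Pi).trace} (ε₁/2 + max 0 (ε₂/2 - ε₁/4)) ∧
    ε₁/2 + ε₂/4 ≠ ε₁/2 + max 0 (ε₂/2 - ε₁/4) := by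
  intro C₁ C₂ Pi U
  have hswap := colStoch_permMatrix (Equiv.swap (0 : Fin 2) 1)
  refine ⟨⟨1, _, colStoch_one 2, hswap, ?_⟩, ⟨1, _, colStoch_one 2, hswap, ?_⟩, ?_, ?_, ?_⟩
  · ext i j; fin_cases i <;> fin_cases j <;> simp [C₁, C₂, mul_apply, Fin.sum_univ_two]
  · ext i j; fin_cases i <;> fin_cases j <;> simp [C₁, C₂, mul_apply, Fin.sum_univ_two]
  · have h := isGreatest_colStoch_fin_two_of_affine (f := fun A => (U * (A * C₁) * Pi).trace)
      (c := ε₁/2) (p := ε₂/4 - ε₁/2) (q := ε₂/4) fun a b => by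
        simp only [U, Pi, C₁]
        rw [trace_offDiag_mul_mul_half, mul_fin_two]
        simp only [of_apply, cons_val_one, cons_val_zero]
        ring
    rwa [max_eq_left (by linarith), max_eq_right (by linarith), add_zero] at h
  · have h := isGreatest_colStoch_fin_two_of_affine (f := fun A => (U * (A * C₂) * Pi).trace)
      (c := ε₁/2) (p := ε₂/2 - ε₁/4) (q := -(ε₁/4)) fun a b => by
        simp only [U, Pi, C₂]
        rw [trace_offDiag_mul_mul_half, mul_fin_two]
        simp only [of_apply, cons_val_one, cons_val_zero]
        ring
    rwa [max_eq_left (b := -(ε₁/4)) (by linarith), add_zero] at h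
  · rw [Ne, add_right_inj, eq_comm, max_eq_iff]
    rintro (⟨h, -⟩ | ⟨h, -⟩) <;> linarith
end

section
/- For any channel C ∈ ℝ^{m×n}, the convexified Shannon policy space Φ_cS(C) equals the convex hull of the finite set {L·C·R : L ∈ ℒ, R ∈ ℛ}, where ℒ is the set of m×m matrices whose columns are standard basis vectors and ℛ is the set of n×n matrices whose columns are standard basis vectors. In particular, Φ_cS(C) is convex and compact. -/
/-!
Every column of a column-stochastic matrix lies in the standard simplex, the convex hull of the
standard basis vectors, so by `convexHull_pi` a column-stochastic matrix is a convex combination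
of matrices whose columns are standard basis vectors. As `(A, B) ↦ A * C * B` is bilinear, each
`A * C * B` with `A`, `B` column-stochastic then lies in the convex hull of the finitely many
`L * C * R`, while `PhiCS C` is by definition the set of convex combinations of such `A * C * B`.
-/

open Matrix BigOperators

/-- A 0-1 matrix each of whose columns is a standard basis vector. -/
def CoordMatrix {m : ℕ} (L : Matrix (Fin m) (Fin m) ℝ) : Prop :=
  ∀ c : Fin m, ∃ i : Fin m, ∀ r : Fin m, L r c = if r = i then 1 else 0

/-- The convexified Shannon policy space of a channel `C`. -/
def PhiCS {m n : ℕ} (C : Matrix (Fin m) (Fin n) ℝ) : Set (Matrix (Fin m) (Fin n) ℝ) :=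
  {D | ∃ (k : ℕ) (p : Fin k → ℝ) (A : Fin k → Matrix (Fin m) (Fin m) ℝ)
        (B : Fin k → Matrix (Fin n) (Fin n) ℝ),
      (∀ i, 0 ≤ p i) ∧ (∑ i, p i = 1) ∧ (∀ i, ColStoch (A i)) ∧ (∀ i, ColStoch (B i)) ∧
      D = ∑ i, p i • (A i * C * B i)}

open Set

theorem LinearMap.image2_convexHull_subset {𝕜 E F G : Type*} [CommSemiring 𝕜] [PartialOrder 𝕜]
    [AddCommMonoid E] [Module 𝕜 E] [AddCommMonoid F] [Module 𝕜 F] [AddCommMonoid G] [Module 𝕜 G]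
    (f : E →ₗ[𝕜] F →ₗ[𝕜] G) (s : Set E) (t : Set F) :
    image2 (fun x y => f x y) (convexHull 𝕜 s) (convexHull 𝕜 t) ⊆
      convexHull 𝕜 (image2 (fun x y => f x y) s t) := by
  rintro _ ⟨x, hx, y, hy, rfl⟩
  have hxt : f x '' t ⊆ convexHull 𝕜 (image2 (fun x y => f x y) s t) := by
    rintro _ ⟨b, hb, rfl⟩
    have hsb : f.flip b '' s ⊆ image2 (fun x y => f x y) s t :=
      fun _ ⟨a, ha, hab⟩ => ⟨a, ha, b, hb, hab⟩
    exact convexHull_mono hsb ((f.flip b).image_convexHull s ▸ mem_image_of_mem _ hx)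
  exact convexHull_min hxt (convex_convexHull 𝕜 _)
    ((f x).image_convexHull t ▸ mem_image_of_mem _ hy)

theorem mem_convexHull_iff_exists_fin {R E : Type*} [Field R] [LinearOrder R]
    [IsStrictOrderedRing R] [AddCommGroup E] [Module R E] {s : Set E} {x : E} :
    x ∈ convexHull R s ↔ ∃ (k : ℕ) (p : Fin k → R) (z : Fin k → E),
      (∀ i, 0 ≤ p i) ∧ ∑ i, p i = 1 ∧ (∀ i, z i ∈ s) ∧ x = ∑ i, p i • z i := by
  constructor
  · rw [mem_convexHull_iff_exists_fintype]
    rintro ⟨ι, _, p, z, hp, hp₁, hz, rfl⟩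
    let e := Fintype.equivFin ι
    refine ⟨Fintype.card ι, p ∘ e.symm, z ∘ e.symm, fun i => hp _, ?_, fun i => hz _, ?_⟩
    · rwa [← e.symm.sum_comp p] at hp₁
    · exact (e.symm.sum_comp fun i => p i • z i).symm
  · rintro ⟨k, p, z, hp, hp₁, hz, rfl⟩
    exact mem_convexHull_of_exists_fintype p z hp hp₁ hz rfl

def coordMatrices (m n : ℕ) : Set (Matrix (Fin m) (Fin n) ℝ) :=
  {L | ∀ c, ∃ i, ∀ r, L r c = if r = i then 1 else 0}

theorem coordMatrices_eq_image_transpose (m n : ℕ) :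
    coordMatrices m n =
      (transpose : Matrix (Fin n) (Fin m) ℝ → _) ''
        univ.pi fun _ => range fun i j : Fin m => if i = j then (1 : ℝ) else 0 := by
  ext L
  constructor
  · intro hL
    refine ⟨Lᵀ, fun c _ => ?_, transpose_transpose L⟩
    obtain ⟨i, hi⟩ := hL c
    exact ⟨i, funext fun r => by simp [hi, eq_comm]⟩
  · rintro ⟨M, hM, rfl⟩ c
    obtain ⟨i, hi⟩ := hM c (mem_univ c)
    exact ⟨i, fun r => by simp [← hi, eq_comm]⟩

theorem finite_coordMatrices (m n : ℕ) : (coordMatrices m n).Finite := by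
  rw [coordMatrices_eq_image_transpose]
  exact (Finite.pi fun _ => finite_range _).image _

theorem colStoch_of_mem_coordMatrices {m n : ℕ} {L : Matrix (Fin m) (Fin n) ℝ}
    (hL : L ∈ coordMatrices m n) : ColStoch L := by
  constructor
  · intro r c
    obtain ⟨i, hi⟩ := hL c
    rw [hi r]
    split_ifs <;> norm_num
  · intro c
    obtain ⟨i, hi⟩ := hL c
    simp [hi]

theorem ColStoch.mem_convexHull_coordMatrices {m n : ℕ} {A : Matrix (Fin m) (Fin n) ℝ}
    (hA : ColStoch A) : A ∈ convexHull ℝ (coordMatrices m n) := by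
  have htranspose : IsLinearMap ℝ (transpose : Matrix (Fin n) (Fin m) ℝ → _) :=
    (transposeLinearEquiv (Fin n) (Fin m) ℝ ℝ).toLinearMap.isLinear
  have hcols : Aᵀ ∈ convexHull ℝ
      (univ.pi fun _ => range fun i j : Fin m => if i = j then (1 : ℝ) else 0) := by
    rw [convexHull_pi]
    intro c _
    rw [convexHull_basis_eq_stdSimplex]
    exact ⟨fun r => hA.1 r c, hA.2 c⟩
  rw [coordMatrices_eq_image_transpose]
  exact (htranspose.image_convexHull _).subset ⟨Aᵀ, hcols, transpose_transpose A⟩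

theorem phiCS_eq_convexHull_colStoch {m n : ℕ} (C : Matrix (Fin m) (Fin n) ℝ) :
    PhiCS C = convexHull ℝ
      (image2 (fun A B => A * C * B) {A : Matrix (Fin m) (Fin m) ℝ | ColStoch A}
        {B : Matrix (Fin n) (Fin n) ℝ | ColStoch B}) := by
  ext D
  rw [mem_convexHull_iff_exists_fin]
  constructor
  · rintro ⟨k, p, A, B, hp, hp₁, hA, hB, rfl⟩
    exact ⟨k, p, fun i => A i * C * B i, hp, hp₁, fun i => ⟨A i, hA i, B i, hB i, rfl⟩, rfl⟩
  · rintro ⟨k, p, z, hp, hp₁, hz, rfl⟩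
    choose A hA B hB hz using hz
    exact ⟨k, p, A, B, hp, hp₁, hA, hB, by simp_rw [hz]⟩

theorem phiCS_eq_convexHull_coordMatrices {m n : ℕ} (C : Matrix (Fin m) (Fin n) ℝ) :
    PhiCS C =
      convexHull ℝ (image2 (fun L R => L * C * R) (coordMatrices m m) (coordMatrices n n)) := by
  have hmul := ((mulLinearMap ℝ).comp (mulRightLinearMap (Fin m) ℝ C)).image2_convexHull_subset
    (coordMatrices m m) (coordMatrices n n)
  rw [phiCS_eq_convexHull_colStoch]
  apply Subset.antisymm
  · refine convexHull_min (Subset.trans ?_ hmul) (convex_convexHull ℝ _)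
    exact image2_subset (fun _ => ColStoch.mem_convexHull_coordMatrices)
      (fun _ => ColStoch.mem_convexHull_coordMatrices)
  · exact convexHull_mono (image2_subset (fun _ => colStoch_of_mem_coordMatrices)
      (fun _ => colStoch_of_mem_coordMatrices))

theorem phiCS_eq_convexHull_general {m n : ℕ} (C : Matrix (Fin m) (Fin n) ℝ) :
    PhiCS C = convexHull ℝ
      {D | ∃ (L : Matrix (Fin m) (Fin m) ℝ) (R : Matrix (Fin n) (Fin n) ℝ),
        CoordMatrix L ∧ (∀ c : Fin n, ∃ i : Fin n, ∀ r : Fin n, R r c = if r = i then 1 else 0) ∧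
        D = L * C * R} ∧
    Convex ℝ (PhiCS C) ∧ IsCompact (PhiCS C) := by
  have hfinite :=
    (finite_coordMatrices m m).image2 (fun L R => L * C * R) (finite_coordMatrices n n)
  rw [phiCS_eq_convexHull_coordMatrices]
  refine ⟨congrArg _ (Set.ext fun _ => ?_), convex_convexHull ℝ _, hfinite.isCompact_convexHull ℝ⟩
  exact ⟨fun ⟨L, hL, R, hR, hD⟩ => ⟨L, R, hL, hR, hD.symm⟩,
    fun ⟨L, R, hL, hR, hD⟩ => ⟨L, hL, R, hR, hD.symm⟩⟩

theorem phiCS_eq_convexHull {m n : ℕ} (C : Matrix (Fin m) (Fin n) ℝ) (hC : ColStoch C) :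
    PhiCS C = convexHull ℝ
      {D | ∃ (L : Matrix (Fin m) (Fin m) ℝ) (R : Matrix (Fin n) (Fin n) ℝ),
        CoordMatrix L ∧ (∀ c : Fin n, ∃ i : Fin n, ∀ r : Fin n, R r c = if r = i then 1 else 0) ∧
        D = L * C * R} ∧
    Convex ℝ (PhiCS C) ∧ IsCompact (PhiCS C) :=
  phiCS_eq_convexHull_general C
end

section
/- Let M̄ = [[M̄₁₁, M̄₁₂],[M̄₂₁, M̄₂₂]] and N̄ = [[N̄₁₁, N̄₁₂],[N̄₂₁, N̄₂₂]] be column-stochastic block matrices, Z a column-stochastic matrix, E a row vector of ones, and suppose the block equations Z̄ = M̄₁₁·Z·N̄₁₁ + M̄₁₂·E·N̄₂₁, 0 = M̄₂₁·Z·N̄₁₁ + M̄₂₂·E·N̄₂₁, 0 = M̄₁₁·Z·N̄₁₂ + M̄₁₂·E·N̄₂₂, E = M̄₂₁·Z·N̄₁₂ + M̄₂₂·E·N̄₂₂ hold, where M̄₁₂ ≠ 0 and N̄₂₁ ≠ 0 and all blocks have nonnegative entries. Then M̄₂₂ = 0, N̄₂₂ = 0, and Z̄ = (M̄₁₁ +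 M̄₁₂·M̄₂₁) · Z · (N̄₁₁ + N̄₁₂·N̄₂₁), where the two bracketed matrices are column-stochastic; hence Z̄ is a Shannon-garbling of Z. -/
/-! The two off-diagonal block equations are sums of entrywise nonnegative matrices equal to zero,
so every summand vanishes. A product `c * E * N` with `E` all ones has entries
`c i 0 * ∑ s, N s j`, so for nonnegative `N` it vanishes only if `c = 0` or `N = 0`; with
`M̄₁₂ ≠ 0` and `N̄₂₁ ≠ 0` this forces `M̄₂₂ = 0` and `N̄₂₂ = 0`. What is left says
`M̄₂₁ Z N̄₁₁ = 0`, `M̄₁₁ Z N̄₁₂ = 0` and `M̄₂₁ Z N̄₁₂ = E`, which turns the cross terms of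
`(M̄₁₁ + M̄₁₂ M̄₂₁) Z (N̄₁₁ + N̄₁₂ N̄₂₁)` into those of the first block equation. Both factors
stay column-stochastic because `M̄₁₂` and `N̄₁₂` are, once `M̄₂₂` and `N̄₂₂` are gone. -/

open Matrix BigOperators

section

variable {ι κ ν : Type*}

lemma mul_entries_nonneg [Fintype κ] {A : Matrix ι κ ℝ} {B : Matrix κ ν ℝ}
    (hA : ∀ i j, 0 ≤ A i j) (hB : ∀ i j, 0 ≤ B i j) : ∀ i j, 0 ≤ (A * B) i j :=
  fun i j => Finset.sum_nonneg fun s _ => mul_nonneg (hA i s) (hB s j)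

lemma eq_zero_and_eq_zero_of_add_eq_zero {A B : Matrix ι κ ℝ}
    (hA : ∀ i j, 0 ≤ A i j) (hB : ∀ i j, 0 ≤ B i j) (h : A + B = 0) : A = 0 ∧ B = 0 := by
  have hij : ∀ i j, A i j + B i j = 0 := fun i j => congrFun (congrFun h i) j
  constructor <;> ext i j <;> rw [Matrix.zero_apply] <;> linarith [hA i j, hB i j, hij i j]

lemma mul_ones_mul_apply [Fintype κ] {c : Matrix ι (Fin 1) ℝ} {E : Matrix (Fin 1) κ ℝ}
    {N : Matrix κ ν ℝ} (hE : ∀ i j, E i j = 1) (i : ι) (j : ν) :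
    (c * E * N) i j = c i 0 * ∑ s, N s j := by
  simp [Matrix.mul_apply, hE, Finset.mul_sum]

lemma eq_zero_or_eq_zero_of_mul_ones_mul_eq_zero [Fintype κ] {c : Matrix ι (Fin 1) ℝ}
    {E : Matrix (Fin 1) κ ℝ} {N : Matrix κ ν ℝ} (hE : ∀ i j, E i j = 1)
    (hN : ∀ i j, 0 ≤ N i j) (h : c * E * N = 0) : c = 0 ∨ N = 0 := by
  by_contra! hne
  obtain ⟨i, hi⟩ : ∃ i, c i 0 ≠ 0 := by
    by_contra! hc
    exact hne.1 (Matrix.ext fun i o => Fin.fin_one_eq_zero o ▸ hc i)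
  obtain ⟨s, j, hsj⟩ : ∃ s j, N s j ≠ 0 := by
    by_contra! hN0
    exact hne.2 (Matrix.ext hN0)
  have hcol : 0 < ∑ s, N s j :=
    Finset.sum_pos' (fun s _ => hN s j) ⟨s, Finset.mem_univ s, (hN s j).lt_of_ne' hsj⟩
  have hentry := congrFun (congrFun h i) j
  rw [mul_ones_mul_apply hE, Matrix.zero_apply] at hentry
  exact mul_ne_zero hi hcol.ne' hentry

lemma sum_mul_apply_of_colSum_eq_one [Fintype ι] [Fintype κ] {B : Matrix ι κ ℝ}
    {C : Matrix κ ν ℝ} (hB : ∀ s, ∑ i, B i s = 1) (j : ν) : ∑ i, (B * C) i j = ∑ s, C s j := by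
  simp only [Matrix.mul_apply]
  rw [Finset.sum_comm]
  simp only [← Finset.sum_mul, hB, one_mul]

end

lemma colStoch_add_mul {p q r : ℕ} {A : Matrix (Fin p) (Fin r) ℝ}
    {B : Matrix (Fin p) (Fin q) ℝ} {C : Matrix (Fin q) (Fin r) ℝ} (hA : ∀ i j, 0 ≤ A i j)
    (hB : ColStoch B) (hC : ∀ i j, 0 ≤ C i j) (hAC : ∀ j, ∑ i, A i j + ∑ s, C s j = 1) :
    ColStoch (A + B * C) := by
  refine ⟨fun i j => add_nonneg (hA i j) (mul_entries_nonneg hB.1 hC i j), fun j => ?_⟩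
  simp only [Matrix.add_apply, Finset.sum_add_distrib, sum_mul_apply_of_colSum_eq_one hB.2,
    hAC]

theorem block_case_three_general {a k l : ℕ}
    (M11 : Matrix (Fin a) (Fin a) ℝ) (M12 : Matrix (Fin a) (Fin 1) ℝ)
    (M21 : Matrix (Fin 1) (Fin a) ℝ) (M22 : Matrix (Fin 1) (Fin 1) ℝ)
    (N11 : Matrix (Fin k) (Fin k) ℝ) (N12 : Matrix (Fin k) (Fin l) ℝ)
    (N21 : Matrix (Fin l) (Fin k) ℝ) (N22 : Matrix (Fin l) (Fin l) ℝ)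
    (Z Zbar : Matrix (Fin a) (Fin k) ℝ)
    (E : Matrix (Fin 1) (Fin l) ℝ) (hE : ∀ i j, E i j = 1)
    -- nonnegativity of all blocks
    (hM11 : ∀ i j, 0 ≤ M11 i j) (hM12 : ∀ i j, 0 ≤ M12 i j)
    (hM21 : ∀ i j, 0 ≤ M21 i j) (hM22 : ∀ i j, 0 ≤ M22 i j)
    (hN11 : ∀ i j, 0 ≤ N11 i j) (hN12 : ∀ i j, 0 ≤ N12 i j)
    (hN21 : ∀ i j, 0 ≤ N21 i j) (hN22 : ∀ i j, 0 ≤ N22 i j)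
    -- column-stochasticity of the full matrices M̄ and N̄
    (hMcol : ∀ j : Fin a, ∑ i, M11 i j + M21 0 j = 1)
    (hMcol' : ∑ i, M12 i 0 + M22 0 0 = 1)
    (hNcol : ∀ j : Fin k, ∑ i, N11 i j + ∑ i, N21 i j = 1)
    (hNcol' : ∀ j : Fin l, ∑ i, N12 i j + ∑ i, N22 i j = 1)
    (hZ : ColStoch Z)
    -- the four block equations
    (e1 : Zbar = M11 * Z * N11 + M12 * E * N21)
    (e2 : (0 : Matrix (Fin 1) (Fin k) ℝ) = M21 * Z * N11 + M22 * E * N21)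
    (e3 : (0 : Matrix (Fin a) (Fin l) ℝ) = M11 * Z * N12 + M12 * E * N22)
    (e4 : E = M21 * Z * N12 + M22 * E * N22)
    (hM12ne : M12 ≠ 0) (hN21ne : N21 ≠ 0) :
    M22 = 0 ∧ N22 = 0 ∧
    Zbar = (M11 + M12 * M21) * Z * (N11 + N12 * N21) ∧
    ColStoch (M11 + M12 * M21) ∧ ColStoch (N11 + N12 * N21) := by
  have hEnn : ∀ i j, 0 ≤ E i j := fun i j => (hE i j).symm ▸ zero_le_one
  have hZnn := hZ.1
  obtain ⟨e2', hM22E⟩ := eq_zero_and_eq_zero_of_add_eq_zero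
    (mul_entries_nonneg (mul_entries_nonneg hM21 hZnn) hN11)
    (mul_entries_nonneg (mul_entries_nonneg hM22 hEnn) hN21) e2.symm
  obtain ⟨e3', hM12E⟩ := eq_zero_and_eq_zero_of_add_eq_zero
    (mul_entries_nonneg (mul_entries_nonneg hM11 hZnn) hN12)
    (mul_entries_nonneg (mul_entries_nonneg hM12 hEnn) hN22) e3.symm
  have hM22 : M22 = 0 :=
    (eq_zero_or_eq_zero_of_mul_ones_mul_eq_zero hE hN21 hM22E).resolve_right hN21ne
  have hN22 : N22 = 0 :=
    (eq_zero_or_eq_zero_of_mul_ones_mul_eq_zero hE hN22 hM12E).resolve_left hM12ne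
  have e4' : M21 * Z * N12 = E := by simpa [hM22] using e4.symm
  have hM12col : ColStoch M12 :=
    ⟨hM12, fun j => by simpa [Fin.fin_one_eq_zero j, hM22] using hMcol'⟩
  have hN12col : ColStoch N12 := ⟨hN12, fun j => by simpa [hN22] using hNcol' j⟩
  refine ⟨hM22, hN22, ?_, colStoch_add_mul hM11 hM12col hM21 (by simpa using hMcol),
    colStoch_add_mul hN11 hN12col hN21 hNcol⟩
  calc Zbar = M11 * Z * N11 + M11 * Z * N12 * N21 + M12 * (M21 * Z * N11)
        + M12 * (M21 * Z * N12) * N21 := by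
        rw [e1, e2', e3', e4', Matrix.mul_zero, Matrix.zero_mul, add_zero, add_zero,
          Matrix.mul_assoc M12 E]
    _ = (M11 + M12 * M21) * Z * (N11 + N12 * N21) := by
        simp only [Matrix.add_mul, Matrix.mul_add, Matrix.mul_assoc]
        abel

/-- Case 3 of the proof of Theorem 2: block analysis of a Shannon-garbling.
Here `a = m-1` is the reduced output size, `k` the reduced input size and
`l = n-k`. The blocks of the column-stochastic matrices `M̄` and `N̄` satisfy
the four block equations; if moreover `M̄₁₂ ≠ 0` and `N̄₂₁ ≠ 0`, then
`M̄₂₂ = 0`, `N̄₂₂ = 0`, and `Z̄ = (M̄₁₁ + M̄₁₂·M̄₂₁)·Z·(N̄₁₁ + N̄₁₂·N̄₂₁)`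
with both bracketed matrices column-stochastic, so `Z̄` is a Shannon-garbling of `Z`. -/
theorem block_case_three {a k l : ℕ}
    (M11 : Matrix (Fin a) (Fin a) ℝ) (M12 : Matrix (Fin a) (Fin 1) ℝ)
    (M21 : Matrix (Fin 1) (Fin a) ℝ) (M22 : Matrix (Fin 1) (Fin 1) ℝ)
    (N11 : Matrix (Fin k) (Fin k) ℝ) (N12 : Matrix (Fin k) (Fin l) ℝ)
    (N21 : Matrix (Fin l) (Fin k) ℝ) (N22 : Matrix (Fin l) (Fin l) ℝ)
    (Z Zbar : Matrix (Fin a) (Fin k) ℝ)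
    (E : Matrix (Fin 1) (Fin l) ℝ) (hE : ∀ i j, E i j = 1)
    -- nonnegativity of all blocks
    (hM11 : ∀ i j, 0 ≤ M11 i j) (hM12 : ∀ i j, 0 ≤ M12 i j)
    (hM21 : ∀ i j, 0 ≤ M21 i j) (hM22 : ∀ i j, 0 ≤ M22 i j)
    (hN11 : ∀ i j, 0 ≤ N11 i j) (hN12 : ∀ i j, 0 ≤ N12 i j)
    (hN21 : ∀ i j, 0 ≤ N21 i j) (hN22 : ∀ i j, 0 ≤ N22 i j)
    -- column-stochasticity of the full matrices M̄ and N̄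
    (hMcol : ∀ j : Fin a, ∑ i, M11 i j + M21 0 j = 1)
    (hMcol' : ∑ i, M12 i 0 + M22 0 0 = 1)
    (hNcol : ∀ j : Fin k, ∑ i, N11 i j + ∑ i, N21 i j = 1)
    (hNcol' : ∀ j : Fin l, ∑ i, N12 i j + ∑ i, N22 i j = 1)
    (hZ : ColStoch Z) (hZbar : ColStoch Zbar)
    -- the four block equations
    (e1 : Zbar = M11 * Z * N11 + M12 * E * N21)
    (e2 : (0 : Matrix (Fin 1) (Fin k) ℝ) = M21 * Z * N11 + M22 * E * N21)
    (e3 : (0 : Matrix (Fin a) (Fin l) ℝ) = M11 * Z * N12 + M12 * E * N22)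
    (e4 : E = M21 * Z * N12 + M22 * E * N22)
    (hM12ne : M12 ≠ 0) (hN21ne : N21 ≠ 0) :
    M22 = 0 ∧ N22 = 0 ∧
    Zbar = (M11 + M12 * M21) * Z * (N11 + N12 * N21) ∧
    ColStoch (M11 + M12 * M21) ∧ ColStoch (N11 + N12 * N21) :=
  block_case_three_general M11 M12 M21 M22 N11 N12 N21 N22 Z Zbar E hE hM11 hM12 hM21 hM22 hN11 hN12
    hN21 hN22 hMcol hMcol' hNcol hNcol' hZ e1 e2 e3 e4 hM12ne hN21ne
end
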